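/- arXiv:0809.1584 — 5 statements merged into one kernel-verified Lean document; each statement's English description precedes it below -/
import Mathlib

section
/- Let N ≥ 1, let 0 ≤ d ≤ π, and let h be an N×N complex unitary matrix all of whose eigenvalues are of the form e^{iα} with α ∈ [−d, d]. Then for every unit vector v ∈ ℂ^N, the real part of the Hermitian inner product ⟨h v, v⟩ is at least cos d. -/
/-!
A unitary matrix is normal, so the continuous functional calculus shows that
`h + h⋆ - 2 cos d` has spectrum `{2 Re z - 2 cos d | z ∈ σ(h)}`. Every eigenvalue `e^{iα}` with
`|α| ≤ d ≤ π` has real part `cos α ≥ cos d`, so this Hermitian matrix is positive semidefinite,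
and its quadratic form at a unit vector `v` is `2 Re ⟨h v, v⟩ - 2 cos d`.
-/

open Matrix
open scoped ComplexOrder InnerProductSpace

namespace Matrix

variable {n : Type*} [Fintype n] [DecidableEq n]

open scoped Norms.L2Operator in
theorem spectrum_add_star_sub_smul_one (A : Matrix n n ℂ) [IsStarNormal A] (c : ℂ) :
    spectrum ℂ (A + star A - c • 1) = (fun z : ℂ => z + star z - c) '' spectrum ℂ A := by
  have hcfc : cfc (fun z : ℂ => z + star z - c) A = A + star A - c • 1 := by
    rw [cfc_sub (fun z : ℂ => z + star z) (fun _ => c) A,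
      cfc_add (a := A) (fun z : ℂ => z) (fun z : ℂ => star z), cfc_id' ℂ A, cfc_star_id (a := A),
      cfc_const c A, Algebra.algebraMap_eq_smul_one]
  rw [← hcfc, cfc_map_spectrum (fun z : ℂ => z + star z - c) A]

theorem posSemidef_add_star_sub_smul_one {A : Matrix n n ℂ} [IsStarNormal A] {c : ℝ}
    (hA : ∀ z ∈ spectrum ℂ A, c ≤ z.re) : (A + star A - (2 * c : ℂ) • 1).PosSemidef := by
  refine posSemidef_iff_isHermitian_and_spectrum_nonneg.mpr ⟨?_, ?_⟩
  · refine (IsSelfAdjoint.add_star_self A).sub (.smul ?_ (.one _))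
    exact_mod_cast Complex.conj_ofReal (2 * c)
  · rw [spectrum_add_star_sub_smul_one]
    rintro _ ⟨z, hz, rfl⟩
    simp only [Set.mem_ofPred_eq, RCLike.star_def, Complex.add_conj]
    exact_mod_cast (by linarith [hA z hz] : (0 : ℝ) ≤ 2 * z.re - 2 * c)

theorem mul_norm_sq_le_re_inner_toEuclideanLin {A : Matrix n n ℂ} [IsStarNormal A] {c : ℝ}
    (hA : ∀ z ∈ spectrum ℂ A, c ≤ z.re) (v : EuclideanSpace ℂ n) :
    c * ‖v‖ ^ 2 ≤ (⟪A.toEuclideanLin v, v⟫_ℂ).re := by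
  have hpos : 0 ≤ (⟪(A + star A - (2 * c : ℂ) • 1).toEuclideanLin v, v⟫_ℂ).re :=
    (isPositive_toEuclideanLin_iff.mpr
      (posSemidef_add_star_sub_smul_one hA)).re_inner_nonneg_left v
  have hform : (⟪(A + star A - (2 * c : ℂ) • 1).toEuclideanLin v, v⟫_ℂ).re =
      2 * (⟪A.toEuclideanLin v, v⟫_ℂ).re - 2 * c * ‖v‖ ^ 2 := by
    simp only [star_eq_conjTranspose, map_sub, map_add, toEuclideanLin_conjTranspose_eq_adjoint,
      map_smul, toLpLin_one, LinearMap.sub_apply, LinearMap.add_apply, LinearMap.smul_apply,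
      LinearMap.id_coe, id_eq, CStarModule.inner_sub_left, CStarModule.inner_add_left,
      LinearMap.adjoint_inner_left, CStarModule.inner_op_smul_left, inner_self_eq_norm_sq_to_K,
      Complex.coe_algebraMap, star_mul', star_ofNat, RCLike.star_def, Complex.conj_ofReal,
      Complex.sub_re, Complex.add_re, Complex.mul_re, Complex.re_ofNat, Complex.ofReal_re,
      Complex.im_ofNat, Complex.ofReal_im, mul_zero, sub_zero]
    rw [← inner_conj_symm (A.toEuclideanLin v) v, Complex.conj_re]
    norm_cast
    ring
  linarith

end Matrix

theorem stmt3_general (N : ℕ) (d : ℝ) (hdπ : d ≤ Real.pi)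
    (h : Matrix (Fin N) (Fin N) ℂ)
    (hu : h ∈ unitary (Matrix (Fin N) (Fin N) ℂ))
    (hspec : ∀ c ∈ spectrum ℂ h, ∃ α : ℝ, -d ≤ α ∧ α ≤ d ∧ c = Complex.exp (α * Complex.I)) :
    ∀ v : EuclideanSpace ℂ (Fin N), ‖v‖ = 1 →
      Real.cos d ≤ (inner (𝕜 := ℂ) (Matrix.toEuclideanLin h v) v).re := by
  intro v hv
  have : IsStarNormal h := isStarNormal_of_mem_unitary hu
  have hre : ∀ z ∈ spectrum ℂ h, Real.cos d ≤ z.re := by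
    intro z hz
    obtain ⟨α, hα₁, hα₂, rfl⟩ := hspec z hz
    rw [Complex.exp_ofReal_mul_I_re, ← Real.cos_abs α]
    exact Real.cos_le_cos_of_nonneg_of_le_pi (abs_nonneg α) hdπ (abs_le.mpr ⟨hα₁, hα₂⟩)
  simpa [hv] using mul_norm_sq_le_re_inner_toEuclideanLin hre v

/-- The displacement estimate from the paper's Lemma `eigeninterval`: if all eigenvalues of
the unitary matrix `h` are of the form `e^{iα}` with `α ∈ [-d, d]` and `0 ≤ d ≤ π`, then
`Re ⟨h v, v⟩ ≥ cos d` for every unit vector `v ∈ ℂᴺ`. -/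
theorem stmt3 (N : ℕ) (hN : 1 ≤ N) (d : ℝ) (hd0 : 0 ≤ d) (hdπ : d ≤ Real.pi)
    (h : Matrix (Fin N) (Fin N) ℂ)
    (hu : h ∈ unitary (Matrix (Fin N) (Fin N) ℂ))
    (hspec : ∀ c ∈ spectrum ℂ h, ∃ α : ℝ, -d ≤ α ∧ α ≤ d ∧ c = Complex.exp (α * Complex.I)) :
    ∀ v : EuclideanSpace ℂ (Fin N), ‖v‖ = 1 →
      Real.cos d ≤ (inner (𝕜 := ℂ) (Matrix.toEuclideanLin h v) v).re :=
  stmt3_general N d hdπ h hu hspec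
end

section
/- Let N ≥ 2 and let x, y ∈ C₋ satisfy ⟨y − x, e_k⟩ ≥ 0 for all 1 ≤ k ≤ N and y ≠ x. Let I_x = { k ∈ {1,…,N−1} : ⟨x, f_k⟩ < 0 }. Then there exists k ∈ I_x with ⟨y − x, e_k⟩ > 0. -/
open BigOperators

/-- Lemma `shevel` of the paper. Vectors in the Cartan subalgebra `𝔥 ⊂ su(N)` are encoded
(1-based) by `x : ℕ → ℝ` with `x 1 + ⋯ + x N = 0`; the pairing `⟨x, e_k⟩` is the partial
sum `x 1 + ⋯ + x k` and `⟨x, f_k⟩ = x k - x (k+1)`. If `x, y ∈ C₋` with `y ≥ x` and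
`y ≠ x`, then there exists `k ∈ I_x = {k : ⟨x, f_k⟩ < 0}` with `⟨y - x, e_k⟩ > 0`. -/
theorem stmt7 (N : ℕ) (hN : 2 ≤ N) (x y : ℕ → ℝ)
    (hxsum : ∑ j ∈ Finset.Icc 1 N, x j = 0) (hysum : ∑ j ∈ Finset.Icc 1 N, y j = 0)
    (hxC : ∀ k, 1 ≤ k → k < N → x k ≤ x (k + 1))
    (hyC : ∀ k, 1 ≤ k → k < N → y k ≤ y (k + 1))
    (hge : ∀ k, 1 ≤ k → k ≤ N → ∑ j ∈ Finset.Icc 1 k, x j ≤ ∑ j ∈ Finset.Icc 1 k, y j)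
    (hne : ∃ k, 1 ≤ k ∧ k ≤ N ∧ x k ≠ y k) :
    ∃ k, 1 ≤ k ∧ k ≤ N - 1 ∧ x k - x (k + 1) < 0 ∧
      ∑ j ∈ Finset.Icc 1 k, x j < ∑ j ∈ Finset.Icc 1 k, y j := by
  classical
  set S : ℕ → ℝ := fun k => ∑ j ∈ Finset.Ioc 0 k, (y j - x j) with hSdef
  have hIcc : ∀ k : ℕ, Finset.Icc 1 k = Finset.Ioc 0 k := by
    intro k
    ext j
    simp [Nat.lt_iff_add_one_le]
  have hSeq : ∀ k, S k = (∑ j ∈ Finset.Icc 1 k, y j) - (∑ j ∈ Finset.Icc 1 k, x j) := by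
    intro k
    simp [hSdef, hIcc, Finset.sum_sub_distrib]
  have hS0 : S 0 = 0 := by simp [hSdef]
  have hSN : S N = 0 := by rw [hSeq, hxsum, hysum]; ring
  have hSnn : ∀ k, k ≤ N → 0 ≤ S k := by
    intro k hk
    rcases Nat.eq_zero_or_pos k with h | h
    · simp [h, hS0]
    · rw [hSeq]
      have := hge k h hk
      linarith
  have hstep : ∀ k, S (k + 1) = S k + (y (k + 1) - x (k + 1)) := by
    intro k
    show (∑ j ∈ Finset.Ioc 0 (k+1), (y j - x j)) = (∑ j ∈ Finset.Ioc 0 k, (y j - x j)) + (y (k + 1) - x (k + 1))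
    rw [show Finset.Ioc (0:ℕ) (k+1) = insert (k+1) (Finset.Ioc 0 k) by
      ext j; simp; omega]
    rw [Finset.sum_insert (by simp)]
    ring
  -- monotone helper
  have mono : ∀ (f : ℕ → ℝ), (∀ k, 1 ≤ k → k < N → f k ≤ f (k + 1)) →
      ∀ i j, 1 ≤ i → i ≤ j → j ≤ N → f i ≤ f j := by
    intro f hf i j h1 hij hjN
    induction j with
    | zero => omega
    | succ n ih =>
      rcases Nat.lt_or_ge i (n + 1) with h | h
      · exact le_trans (ih (by omega) (by omega)) (hf n (by omega) (by omega))
      · have : i = n + 1 := by omega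
        simp [this]
  -- existence of m with S m > 0, 1 ≤ m ≤ N - 1
  obtain ⟨k0, hk01, hk0N, hk0ne⟩ := hne
  have hm : ∃ m, 1 ≤ m ∧ m ≤ N - 1 ∧ 0 < S m := by
    by_cases h : 0 < S k0
    · refine ⟨k0, hk01, ?_, h⟩
      have : k0 ≠ N := by
        intro he; rw [he, hSN] at h; exact lt_irrefl 0 h
      omega
    · have hk0z : S k0 = 0 := le_antisymm (not_lt.mp h) (hSnn k0 hk0N)
      obtain ⟨p, hp⟩ : ∃ p, k0 = p + 1 := ⟨k0 - 1, by omega⟩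
      have hsp : S (p + 1) = S p + (y (p + 1) - x (p + 1)) := hstep p
      rw [← hp] at hsp
      have hSp : S p = -(y k0 - x k0) := by rw [hp] at hk0z ⊢; linarith [hstep p, hk0z]
      have hSpne : S p ≠ 0 := by
        intro hz; rw [hz] at hSp; apply hk0ne; linarith
      have hSppos : 0 < S p := lt_of_le_of_ne (hSnn p (by omega)) (Ne.symm hSpne)
      have hp1 : 1 ≤ p := by
        by_contra hc
        have : p = 0 := by omega
        rw [this, hS0] at hSppos; exact lt_irrefl 0 hSppos
      exact ⟨p, hp1, by omega, hSppos⟩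
  obtain ⟨m, hm1, hmN1, hSm⟩ := hm
  by_contra hcon
  push_neg at hcon
  -- reformulate: S k > 0 for admissible k forces x (k+1) = x k
  have Hx : ∀ k, 1 ≤ k → k ≤ N - 1 → 0 < S k → x (k + 1) = x k := by
    intro k h1 h2 hpos
    have hslt : ∑ j ∈ Finset.Icc 1 k, x j < ∑ j ∈ Finset.Icc 1 k, y j := by
      have := hSeq k; linarith
    by_contra hne'
    have hle : x k ≤ x (k + 1) := hxC k h1 (by omega)
    have hlt : x k - x (k + 1) < 0 := by
      rcases lt_or_eq_of_le hle with h | h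
      · linarith
      · exact absurd h.symm hne'
    have := hcon k h1 h2 hlt
    linarith
  -- a = greatest zero of S below m
  set a := Nat.findGreatest (fun j => S j = 0) m with hadef
  have haz : S a = 0 := Nat.findGreatest_spec (P := fun j => S j = 0) (Nat.zero_le m) hS0
  have ham : a ≤ m := Nat.findGreatest_le m
  have ha_max : ∀ j, a < j → j ≤ m → S j ≠ 0 := by
    intro j h1 h2
    exact Nat.findGreatest_is_greatest h1 h2
  have halt : a < m := by
    rcases lt_or_eq_of_le ham with h | h
    · exact h
    · exfalso; rw [h] at haz; rw [haz] at hSm; exact lt_irrefl 0 hSm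
  -- b = least zero of S above m
  have hbex : ∃ j, m < j ∧ j ≤ N ∧ S j = 0 := ⟨N, by omega, le_refl N, hSN⟩
  set b := Nat.find hbex with hbdef
  obtain ⟨hmb, hbN, hbz⟩ := Nat.find_spec hbex
  have hb_min : ∀ j, j < b → ¬(m < j ∧ j ≤ N ∧ S j = 0) := fun j hj => Nat.find_min hbex hj
  -- positivity on the open block
  have hpos : ∀ j, a < j → j < b → 0 < S j := by
    intro j h1 h2
    rcases le_or_gt j m with h | h
    · exact lt_of_le_of_ne (hSnn j (by omega)) (Ne.symm (ha_max j h1 h))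
    · have := hb_min j h2
      have hjne : S j ≠ 0 := by
        intro hz; exact this ⟨h, by omega, hz⟩
      exact lt_of_le_of_ne (hSnn j (by omega)) (Ne.symm hjne)
  -- x constant on [a+1, b]
  have hconst : ∀ j, a + 1 ≤ j → j ≤ b → x j = x (a + 1) := by
    have key : ∀ t, a + 1 + t ≤ b → x (a + 1 + t) = x (a + 1) := by
      intro t
      induction t with
      | zero => intro _; rfl
      | succ n ih =>
        intro hle
        have h1 : x (a + 1 + n + 1) = x (a + 1 + n) := by
          apply Hx (a + 1 + n) (by omega) (by omega)
          exact hpos (a + 1 + n) (by omega) (by omega)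
        have : a + 1 + (n + 1) = a + 1 + n + 1 := by ring
        rw [this, h1, ih (by omega)]
    intro j h1 h2
    have : j = a + 1 + (j - (a + 1)) := by omega
    rw [this]
    exact key _ (by omega)
  -- sum splitting
  have hsplit : ∀ p q : ℕ, p ≤ q → S q - S p = ∑ j ∈ Finset.Ioc p q, (y j - x j) := by
    intro p q hpq
    have := Finset.sum_Ioc_consecutive (fun j => y j - x j) (Nat.zero_le p) hpq
    rw [hSdef]
    simp only at this ⊢
    linarith [this]
  set c := x (a + 1) with hcdef
  -- y m > c
  have hym : c < y m := by
    by_contra h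
    push_neg at h
    have hsum1 : S m - S a = ∑ j ∈ Finset.Ioc a m, (y j - x j) := hsplit a m (le_of_lt halt)
    have hnp : ∑ j ∈ Finset.Ioc a m, (y j - x j) ≤ 0 := by
      apply Finset.sum_nonpos
      intro j hj
      simp only [Finset.mem_Ioc] at hj
      have hxj : x j = c := hconst j (by omega) (by omega)
      have hyj : y j ≤ y m := mono y hyC j m (by omega) hj.2 (by omega)
      rw [hxj]; linarith
    rw [haz] at hsum1
    linarith
  -- final contradiction on Ioc m b
  have hsum2 : S b - S m = ∑ j ∈ Finset.Ioc m b, (y j - x j) := hsplit m b (le_of_lt hmb)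
  have hposum : 0 < ∑ j ∈ Finset.Ioc m b, (y j - x j) := by
    apply Finset.sum_pos
    · intro j hj
      simp only [Finset.mem_Ioc] at hj
      have hxj : x j = c := hconst j (by omega) hj.2
      have hyj : y m ≤ y j := mono y hyC m j hm1 (le_of_lt hj.1) (by omega)
      rw [hxj]; linarith
    · exact ⟨b, Finset.mem_Ioc.mpr ⟨hmb, le_refl b⟩⟩
  rw [hbz] at hsum2
  linarith
end

section
/- Let N ≥ 2 and let Λ ⊆ C₋ be a subset that is closed and discrete in 𝔥. Let l ∈ Λ and put I_l = { k ∈ {1,…,N−1} : ⟨l, f_k⟩ < 0 }. Then there exists ε > 0 such that for every l' ∈ Λ with l' ≠ l, either there exists k ∈ I_l with ⟨l' − l, e_k⟩ ∉ [0, ε], or there exists k ∈ {1,…,N−1} with k ∉ I_l and ⟨l', e_k⟩ < ⟨l, e_k⟩. -/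
open BigOperators

/-- `⟨x, e_k⟩`: the sum of the first `k` coordinates of `x`. -/
noncomputable def psum (N : ℕ) (x : EuclideanSpace ℝ (Fin N)) (k : ℕ) : ℝ :=
  ∑ j ∈ Finset.univ.filter (fun j : Fin N => (j : ℕ) < k), x j

/-- `⟨x, f_{k+1}⟩` (roots indexed by `k : Fin (N-1)`): `x_{k+1} - x_{k+2}` in 1-based
notation, i.e. the difference of consecutive coordinates. -/
noncomputable def fpair (N : ℕ) (x : EuclideanSpace ℝ (Fin N)) (k : Fin (N - 1)) : ℝ :=
  x ⟨(k : ℕ), lt_of_lt_of_le k.isLt (Nat.sub_le N 1)⟩ -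
    x ⟨(k : ℕ) + 1, by have := k.isLt; omega⟩

lemma psum_zero (N : ℕ) (x : EuclideanSpace ℝ (Fin N)) : psum N x 0 = 0 := by
  simp [psum]

lemma psum_succ (N : ℕ) (x : EuclideanSpace ℝ (Fin N)) (k : ℕ) (hk : k < N) :
    psum N x (k + 1) = psum N x k + x ⟨k, hk⟩ := by
  unfold psum
  have h : (Finset.univ.filter (fun j : Fin N => (j : ℕ) < k + 1))
      = insert (⟨k, hk⟩ : Fin N) (Finset.univ.filter (fun j : Fin N => (j : ℕ) < k)) := by
    ext j
    simp [Fin.ext_iff]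
    omega
  rw [h, Finset.sum_insert (by simp)]
  ring

lemma psum_top (N : ℕ) (x : EuclideanSpace ℝ (Fin N)) : psum N x N = ∑ j, x j := by
  unfold psum
  congr 1
  ext j
  simp [j.isLt]

/-- If `D` vanishes at `0` and `N`, and at every interior point is either `≤ ε` or
convex, then `D ≤ ε` everywhere on `[0, N]`. -/
lemma conv_bound (N : ℕ) (D : ℕ → ℝ) (ε : ℝ) (hε : 0 ≤ ε)
    (h0 : D 0 = 0) (hN : D N = 0)
    (hk : ∀ k, 1 ≤ k → k + 1 ≤ N → D k ≤ ε ∨ 2 * D k ≤ D (k - 1) + D (k + 1)) :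
    ∀ k ≤ N, D k ≤ ε := by
  set S := Finset.range (N + 1) with hS
  have hSne : S.Nonempty := ⟨0, by simp [hS]⟩
  obtain ⟨m, hmS, hmax⟩ := S.exists_max_image D hSne
  set B := S.filter (fun j => ∀ a ∈ S, D a ≤ D j) with hB
  have hBne : B.Nonempty := ⟨m, by simp only [hB, Finset.mem_filter]; exact ⟨hmS, hmax⟩⟩
  set k := B.min' hBne with hkdef
  have hkB : k ∈ B := B.min'_mem hBne
  have hkS : k ∈ S := (Finset.mem_filter.1 hkB).1
  have hkmax : ∀ a ∈ S, D a ≤ D k := (Finset.mem_filter.1 hkB).2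
  have hkN : k ≤ N := by
    have := Finset.mem_range.1 hkS; omega
  have key : D k ≤ ε := by
    rcases Nat.eq_zero_or_pos k with h | h
    · rw [h, h0]; exact hε
    rcases eq_or_lt_of_le hkN with h' | h'
    · rw [h', hN]; exact hε
    rcases hk k h (by omega) with h'' | h''
    · exact h''
    · have h1 : D (k + 1) ≤ D k := hkmax _ (by simp [hS]; omega)
      have h2 : D k ≤ D (k - 1) := by linarith
      have h3 : (k - 1) ∈ B := by
        refine Finset.mem_filter.2 ⟨by simp [hS]; omega, fun a ha => ?_⟩
        exact le_trans (hkmax a ha) h2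
      have h4 := B.min'_le _ h3
      omega
  intro j hj
  exact le_trans (hkmax j (by simp [hS]; omega)) key

/-- Lemma `epsi` of the paper: for a closed discrete subset `Λ` of the negative Weyl
chamber `C₋ ⊂ 𝔥` and `l ∈ Λ`, there is `ε > 0` such that every `l' ∈ Λ`, `l' ≠ l`,
either has `⟨l' - l, e_k⟩ ∉ [0, ε]` for some `k ∈ I_l`, or `⟨l', e_k⟩ < ⟨l, e_k⟩` for
some `k ∉ I_l`. -/
theorem stmt8 (N : ℕ) (hN : 2 ≤ N) (Λ : Set (EuclideanSpace ℝ (Fin N)))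
    (hsum : ∀ l ∈ Λ, ∑ j, l j = 0)
    (hC : ∀ l ∈ Λ, Monotone fun j : Fin N => l j)
    (hclosed : IsClosed Λ)
    (hdiscrete : ∀ l ∈ Λ, ∃ ε > (0 : ℝ), ∀ l' ∈ Λ, dist l l' < ε → l' = l)
    (l : EuclideanSpace ℝ (Fin N)) (hl : l ∈ Λ) :
    ∃ ε > (0 : ℝ), ∀ l' ∈ Λ, l' ≠ l →
      (∃ k : Fin (N - 1), fpair N l k < 0 ∧
        ¬ (0 ≤ psum N l' ((k : ℕ) + 1) - psum N l ((k : ℕ) + 1) ∧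
           psum N l' ((k : ℕ) + 1) - psum N l ((k : ℕ) + 1) ≤ ε)) ∨
      (∃ k : Fin (N - 1), ¬ fpair N l k < 0 ∧
        psum N l' ((k : ℕ) + 1) < psum N l ((k : ℕ) + 1)) := by
  obtain ⟨δ, hδ, hdisc⟩ := hdiscrete l hl
  refine ⟨δ / (N + 1), by positivity, ?_⟩
  intro l' hl' hne
  by_contra hcon
  push_neg at hcon
  obtain ⟨h1, h2⟩ := hcon
  set ε : ℝ := δ / (N + 1) with hεdef
  have hε0 : 0 < ε := by positivity
  set D : ℕ → ℝ := fun k => psum N l' k - psum N l k with hD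
  have hD0 : D 0 = 0 := by simp [hD, psum_zero]
  have hDN : D N = 0 := by simp [hD, psum_top, hsum l hl, hsum l' hl']
  have hnonneg : ∀ k ≤ N, 0 ≤ D k := by
    intro k hkN
    rcases Nat.eq_zero_or_pos k with h | h
    · rw [h, hD0]
    rcases eq_or_lt_of_le hkN with h' | h'
    · rw [h', hDN]
    obtain ⟨j, rfl⟩ : ∃ j, k = j + 1 := ⟨k - 1, by omega⟩
    set i : Fin (N - 1) := ⟨j, by omega⟩ with hi
    by_cases hf : fpair N l i < 0
    · exact (h1 i hf).1
    · have := h2 i (not_lt.1 hf)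
      simp only [hD]
      linarith [this]
  have hconv : ∀ k, 1 ≤ k → k + 1 ≤ N → D k ≤ ε ∨ 2 * D k ≤ D (k - 1) + D (k + 1) := by
    intro k hk1 hkN
    obtain ⟨j, rfl⟩ : ∃ j, k = j + 1 := ⟨k - 1, by omega⟩
    set i : Fin (N - 1) := ⟨j, by omega⟩ with hi
    by_cases hf : fpair N l i < 0
    · exact Or.inl ((h1 i hf).2)
    · right
      have hjN : j < N := by omega
      have hj1N : j + 1 < N := by omega
      have hfe : fpair N l i = l ⟨j, hjN⟩ - l ⟨j + 1, hj1N⟩ := rfl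
      have hmono : l ⟨j, hjN⟩ ≤ l ⟨j + 1, hj1N⟩ :=
        hC l hl (by simp [Fin.mk_le_mk])
      have hmono' : l' ⟨j, hjN⟩ ≤ l' ⟨j + 1, hj1N⟩ :=
        hC l' hl' (by simp [Fin.mk_le_mk])
      have hfz : l ⟨j, hjN⟩ - l ⟨j + 1, hj1N⟩ = 0 := by
        have h5 : ¬ (l ⟨j, hjN⟩ - l ⟨j + 1, hj1N⟩ < 0) := by rw [← hfe]; exact hf
        push_neg at h5
        linarith
      have e1 : psum N l (j + 1) = psum N l j + l ⟨j, hjN⟩ := psum_succ N l j hjN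
      have e2 : psum N l (j + 1 + 1) = psum N l (j + 1) + l ⟨j + 1, hj1N⟩ :=
        psum_succ N l (j + 1) hj1N
      have e3 : psum N l' (j + 1) = psum N l' j + l' ⟨j, hjN⟩ := psum_succ N l' j hjN
      have e4 : psum N l' (j + 1 + 1) = psum N l' (j + 1) + l' ⟨j + 1, hj1N⟩ :=
        psum_succ N l' (j + 1) hj1N
      have ekm : j + 1 - 1 = j := by omega
      simp only [hD, ekm, e1, e2, e3, e4]
      linarith
  have hDle : ∀ k ≤ N, D k ≤ ε := conv_bound N D ε (le_of_lt hε0) hD0 hDN hconv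
  have hbound : ∀ j : Fin N, |l j - l' j| ≤ ε := by
    intro j
    have hjN : (j : ℕ) < N := j.isLt
    have e1 : psum N l ((j : ℕ) + 1) = psum N l j + l j := by
      have := psum_succ N l j hjN
      simpa using this
    have e2 : psum N l' ((j : ℕ) + 1) = psum N l' j + l' j := by
      have := psum_succ N l' j hjN
      simpa using this
    have b1 : 0 ≤ D j := hnonneg j (le_of_lt hjN)
    have b2 : D j ≤ ε := hDle j (le_of_lt hjN)
    have b3 : 0 ≤ D ((j : ℕ) + 1) := hnonneg _ (by omega)
    have b4 : D ((j : ℕ) + 1) ≤ ε := hDle _ (by omega)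
    simp only [hD] at b1 b2 b3 b4
    rw [e1, e2] at b3 b4
    rw [abs_le]
    constructor <;> linarith
  have hdist : dist l l' < δ := by
    rw [EuclideanSpace.dist_eq]
    have hsum2 : ∑ i, dist (l i) (l' i) ^ 2 ≤ N * ε ^ 2 := by
      have : ∀ i : Fin N, dist (l i) (l' i) ^ 2 ≤ ε ^ 2 := by
        intro i
        rw [Real.dist_eq]
        exact pow_le_pow_left₀ (abs_nonneg _) (hbound i) 2
      calc ∑ i, dist (l i) (l' i) ^ 2 ≤ ∑ _i : Fin N, ε ^ 2 :=
            Finset.sum_le_sum (fun i _ => this i)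
        _ = N * ε ^ 2 := by simp [Finset.card_univ, mul_comm]
    have hlt : (N : ℝ) * ε ^ 2 < δ ^ 2 := by
      have hN1 : (0 : ℝ) < (N : ℝ) + 1 := by positivity
      rw [hεdef, div_pow, ← mul_div_assoc, div_lt_iff₀ (by positivity)]
      have hNlt : (N : ℝ) < ((N : ℝ) + 1) ^ 2 := by nlinarith [Nat.cast_nonneg (α := ℝ) N]
      nlinarith [mul_pos hδ hδ]
    calc Real.sqrt (∑ i, dist (l i) (l' i) ^ 2) ≤ Real.sqrt ((N : ℝ) * ε ^ 2) :=
          Real.sqrt_le_sqrt hsum2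
      _ < δ := by
          rw [show δ = Real.sqrt (δ ^ 2) by rw [Real.sqrt_sq (le_of_lt hδ)]]
          exact Real.sqrt_lt_sqrt (by positivity) hlt
  exact hne (hdisc l' hl' hdist)
end

section
/- Let N ≥ 2 and I ⊆ {1,…,N−1}. Every x ∈ C₋° can be written (uniquely, since the vectors involved form a basis of 𝔥) as x = Σ_{i∈I} a_i e_i + Σ_{j∉I} b_j f_j, and in this decomposition a_i < 0 for all i ∈ I and b_j ≤ 0 for all j ∉ I. Conversely, for every family of negative reals (a_i)_{i∈I} there exist reals b_j, j ∉ I, such that Σ_{i∈I} a_i e_i + Σ_{j∉I} b_j f_j ∈ C₋°. Consequently, the image of C₋° under the projection of 𝔥 onto the span of { e_i : i ∈ I } along the span of { f_j : j ∉ I } is exactly { Σ_{i∈I} a_i e_i : a_i < 0 for all i ∈ I }. -/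
open BigOperators

/-- The simple-root vector `f_{k+1}` (1-based index `k+1`, `k : Fin (N-1)`):
coordinate `1` at position `k`, `-1` at position `k+1` (0-based), `0` elsewhere. -/
def fvec (N : ℕ) (k : Fin (N - 1)) : Fin N → ℝ := fun j =>
  if (j : ℕ) = (k : ℕ) then 1 else if (j : ℕ) = (k : ℕ) + 1 then -1 else 0

/-- The coweight vector `e_{k+1}` (1-based index `m = k+1`, `k : Fin (N-1)`): the first `m`
coordinates equal `(N - m)/N` and the remaining `N - m` coordinates equal `-m/N`. -/
noncomputable def evec (N : ℕ) (k : Fin (N - 1)) : Fin N → ℝ := fun j =>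
  if (j : ℕ) < (k : ℕ) + 1 then ((N : ℝ) - ((k : ℕ) + 1)) / N else -(((k : ℕ) + 1 : ℕ) : ℝ) / N

/-- Membership in the interior `C₋°` of the negative Weyl chamber:
sum of coordinates zero and strictly increasing coordinates. -/
def inNegChamberInt {N : ℕ} (x : Fin N → ℝ) : Prop :=
  (∑ j, x j = 0) ∧ StrictMono x

/-!
The vectors `eᵢ` and `fⱼ` are biorthogonal, `(eᵢ, fⱼ) = δᵢⱼ`. Hence `{eᵢ}_{i∈I} ∪ {fⱼ}_{j∉I}` is
linearly independent (in a relation `E + F = 0` one has `(E, E) = -(E, F) = 0`), so it is a basis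
of `𝔥` by counting dimensions.

Write `x ∈ C₋°` as `x = ∑ aᵢ eᵢ + y` with `y = ∑ bⱼ fⱼ`, and let `P(m) = y₁ + ⋯ + y_m`. Pairing
with the `eₖ` gives `bⱼ = P(j)`, and `P` vanishes at `0`, at `N` and at every `i ∈ I`. At every
other `m` the function `P` is strictly convex, because its second difference there is
`-(y, f_m) = -(x, f_m) > 0`. By the discrete maximum principle `P ≤ 0`, so `bⱼ ≤ 0` and
`aᵢ = (x, fᵢ) + P(i-1) + P(i+1) < 0`. Conversely, let `y₀` be the `f`-part of a vector whose
coordinates are equally spaced. Then `∑ aᵢ eᵢ + ε y₀ ∈ C₋°` for all small `ε > 0`.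
-/

open Finset Filter Topology

section Biorthogonal

variable {R n ι : Type*} [Fintype n] [DecidableEq ι] {e f : ι → n → R}

theorem sum_smul_dotProduct_of_biorthogonal [CommRing R]
    (hef : ∀ i j, e i ⬝ᵥ f j = if i = j then 1 else 0) (s : Finset ι) (c : ι → R) (j : ι) :
    (∑ i ∈ s, c i • e i) ⬝ᵥ f j = if j ∈ s then c j else 0 := by
  simp [sum_dotProduct, smul_dotProduct, hef]

theorem dotProduct_sum_smul_of_biorthogonal [CommRing R]
    (hef : ∀ i j, e i ⬝ᵥ f j = if i = j then 1 else 0) (s : Finset ι) (c : ι → R) (i : ι) :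
    e i ⬝ᵥ (∑ j ∈ s, c j • f j) = if i ∈ s then c i else 0 := by
  simp [dotProduct_sum, dotProduct_smul, hef]

theorem Finset.sum_smul_piecewise [Fintype ι] {M : Type*} [Semiring R] [AddCommMonoid M]
    [Module R M] (s : Finset ι) (u v : ι → M) (c : ι → R) :
    ∑ k, c k • s.piecewise u v k = ∑ i ∈ s, c i • u i + ∑ j ∈ sᶜ, c j • v j := by
  rw [← sum_add_sum_compl s]
  congr 1
  · exact sum_congr rfl fun k hk => by rw [piecewise_eq_of_mem _ _ _ hk]
  · exact sum_congr rfl fun k hk => by rw [piecewise_eq_of_notMem _ _ _ (mem_compl.mp hk)]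

theorem Finset.sum_piecewise_smul_piecewise [Fintype ι] {M : Type*} [Semiring R]
    [AddCommMonoid M] [Module R M] (s : Finset ι) (u v : ι → M) (a b : ι → R) :
    ∑ k, s.piecewise a b k • s.piecewise u v k = ∑ i ∈ s, a i • u i + ∑ j ∈ sᶜ, b j • v j := by
  rw [sum_smul_piecewise]
  congr 1
  · exact sum_congr rfl fun k hk => by rw [piecewise_eq_of_mem _ _ _ hk]
  · exact sum_congr rfl fun k hk => by rw [piecewise_eq_of_notMem _ _ _ (mem_compl.mp hk)]

theorem linearIndependent_piecewise_of_biorthogonal [Fintype ι] [Field R] [LinearOrder R]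
    [IsStrictOrderedRing R] (hef : ∀ i j, e i ⬝ᵥ f j = if i = j then 1 else 0) (s : Finset ι) :
    LinearIndependent R (s.piecewise e f) := by
  rw [Fintype.linearIndependent_iff]
  intro g hg
  rw [Finset.sum_smul_piecewise] at hg
  have hEF : (∑ i ∈ s, g i • e i) ⬝ᵥ (∑ j ∈ sᶜ, g j • f j) = 0 := by
    rw [sum_dotProduct]
    exact sum_eq_zero fun i hi => by
      simp [smul_dotProduct, dotProduct_sum_smul_of_biorthogonal hef, hi]
  have hE : ∑ i ∈ s, g i • e i = 0 := by
    rw [← dotProduct_self_eq_zero]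
    nth_rw 2 [eq_neg_of_add_eq_zero_left hg]
    rw [dotProduct_neg, hEF, neg_zero]
  have hF : ∑ j ∈ sᶜ, g j • f j = 0 := by rwa [hE, zero_add] at hg
  intro k
  by_cases hk : k ∈ s
  · simpa [hk, hE] using (sum_smul_dotProduct_of_biorthogonal hef s g k).symm
  · simpa [hk, hF] using (dotProduct_sum_smul_of_biorthogonal hef sᶜ g k).symm

end Biorthogonal

theorem LinearIndependent.exists_sum_smul_eq_of_sum_eq_zero {K n ι : Type*} [Field K]
    [Fintype n] [Fintype ι] {v : ι → n → K} (hv : LinearIndependent K v)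
    (hcard : Fintype.card ι + 1 = Fintype.card n) (hsum : ∀ k, ∑ j, v k j = 0) {x : n → K}
    (hx : ∑ j, x j = 0) :
    ∃ c : ι → K, ∑ k, c k • v k = x := by
  classical
  let σ : Module.Dual K (n → K) := ∑ j, LinearMap.proj j
  have hσ : ∀ y, σ y = ∑ j, y j := fun y => by simp [σ]
  have hσ0 : σ ≠ 0 := by
    obtain ⟨j⟩ : Nonempty n := Fintype.card_pos_iff.mp (by omega)
    intro h
    simpa [hσ] using LinearMap.congr_fun h (Pi.single j 1)
  have hspan : Submodule.span K (Set.range v) = LinearMap.ker σ := by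
    refine Submodule.eq_of_le_of_finrank_le ?_ ?_
    · rw [Submodule.span_le]
      rintro _ ⟨k, rfl⟩
      simpa [hσ] using hsum k
    · have := σ.finrank_ker_add_one_of_ne_zero hσ0
      rw [finrank_span_eq_card hv]
      simp only [Module.finrank_fintype_fun_eq_card] at this
      omega
  rw [← Submodule.mem_span_range_iff_exists_fun, hspan, LinearMap.mem_ker, hσ, hx]

theorem nonpos_of_forall_eq_zero_or_lt_add {α : Type*} [AddCommGroup α] [LinearOrder α]
    [IsOrderedAddMonoid α] {g : ℕ → α} {n : ℕ}
    (h : ∀ m ≤ n, g m = 0 ∨ (0 < m ∧ m < n ∧ g m + g m < g (m - 1) + g (m + 1))) :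
    ∀ m ≤ n, g m ≤ 0 := by
  obtain ⟨m₀, hm₀, hmax⟩ := (range (n + 1)).exists_max_image g ⟨0, by simp⟩
  rw [mem_range] at hm₀
  rcases h m₀ (by omega) with h₀ | ⟨-, hlt, hconv⟩
  · exact fun m hm => h₀ ▸ hmax m (by simp; omega)
  · have hle := add_le_add (hmax (m₀ - 1) (by simp; omega)) (hmax (m₀ + 1) (by simp; omega))
    exact absurd hconv hle.not_gt

def partialSum {N : ℕ} (v : Fin N → ℝ) (m : ℕ) : ℝ :=
  ∑ u : Fin N, if (u : ℕ) < m then v u else 0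

section PartialSum

variable {N : ℕ} (v : Fin N → ℝ)

@[simp] theorem partialSum_zero : partialSum v 0 = 0 := by
  simp [partialSum]

theorem partialSum_self : partialSum v N = ∑ j, v j := by
  simp [partialSum]

theorem partialSum_succ {m : ℕ} (hm : m < N) :
    partialSum v (m + 1) = partialSum v m + v ⟨m, hm⟩ := by
  rw [partialSum, partialSum, ← Fintype.sum_ite_eq' (⟨m, hm⟩ : Fin N) v, ← sum_add_distrib]
  refine sum_congr rfl fun u _ => ?_
  simp only [Fin.ext_iff]
  split_ifs <;> first | omega | simp

end PartialSum

section Vectors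

variable {N : ℕ}

theorem fvec_eq (k : Fin (N - 1)) :
    fvec N k = Pi.single ⟨k, by omega⟩ 1 - Pi.single ⟨k + 1, by omega⟩ 1 := by
  funext j
  simp only [fvec, Pi.sub_apply, Pi.single_apply, Fin.ext_iff]
  split_ifs <;> first | omega | norm_num

theorem dotProduct_fvec (v : Fin N → ℝ) (k : Fin (N - 1)) :
    v ⬝ᵥ fvec N k = v ⟨k, by omega⟩ - v ⟨k + 1, by omega⟩ := by
  rw [fvec_eq, dotProduct_sub, dotProduct_single, dotProduct_single, mul_one, mul_one]

theorem dotProduct_fvec_eq_partialSum (v : Fin N → ℝ) (k : Fin (N - 1)) :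
    v ⬝ᵥ fvec N k = 2 * partialSum v (k + 1) - partialSum v k - partialSum v (k + 2) := by
  rw [dotProduct_fvec, partialSum_succ v (by omega : (k : ℕ) + 1 < N),
    partialSum_succ v (by omega : (k : ℕ) < N)]
  ring

theorem sum_fvec (k : Fin (N - 1)) : ∑ j, fvec N k j = 0 := by
  rw [← dotProduct_one, dotProduct_comm, dotProduct_fvec]
  simp

theorem evec_apply (k : Fin (N - 1)) (u : Fin N) :
    evec N k u = (if (u : ℕ) < k + 1 then 1 else 0) - ((k : ℝ) + 1) / N := by
  have hN : (N : ℝ) ≠ 0 := by have := k.isLt; norm_cast; omega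
  simp only [evec]
  split_ifs <;> field_simp
  push_cast
  ring

theorem dotProduct_evec (v : Fin N → ℝ) (k : Fin (N - 1)) :
    v ⬝ᵥ evec N k = partialSum v (k + 1) - ((k : ℝ) + 1) / N * ∑ j, v j := by
  simp [dotProduct, evec_apply, mul_sub, sum_sub_distrib, partialSum, sum_mul, mul_comm]

theorem sum_evec (k : Fin (N - 1)) : ∑ j, evec N k j = 0 := by
  have hN : (N : ℝ) ≠ 0 := by have := k.isLt; norm_cast; omega
  rw [← dotProduct_one, dotProduct_comm, dotProduct_evec, partialSum]
  simp only [Pi.one_apply, sum_boole, Fin.card_filter_val_lt, sum_const, card_univ,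
    Fintype.card_fin, nsmul_eq_mul, mul_one, min_eq_right (by omega : (k : ℕ) + 1 ≤ N)]
  field_simp
  push_cast
  ring

theorem evec_dotProduct_fvec (i j : Fin (N - 1)) :
    evec N i ⬝ᵥ fvec N j = if i = j then 1 else 0 := by
  rw [dotProduct_fvec, evec_apply, evec_apply]
  simp only [Fin.ext_iff]
  split_ifs <;> first | omega | ring

end Vectors

theorem strictMono_iff_forall_dotProduct_fvec_neg {N : ℕ} (x : Fin N → ℝ) :
    StrictMono x ↔ ∀ k : Fin (N - 1), x ⬝ᵥ fvec N k < 0 := by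
  simp only [dotProduct_fvec, sub_neg]
  rcases N with _ | n
  · simp [Subsingleton.strictMono]
  rw [Fin.strictMono_iff_lt_succ]
  exact ⟨fun h k => h ⟨k, by omega⟩, fun h i => h ⟨i, by omega⟩⟩

section Decomposition

variable {N : ℕ} (I : Finset (Fin (N - 1)))

theorem linearIndependent_piecewise_evec_fvec :
    LinearIndependent ℝ (I.piecewise (evec N) (fvec N)) :=
  linearIndependent_piecewise_of_biorthogonal evec_dotProduct_fvec I

theorem exists_sum_smul_piecewise_evec_fvec (hN : 2 ≤ N) {x : Fin N → ℝ} (hx : ∑ j, x j = 0) :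
    ∃ c : Fin (N - 1) → ℝ, ∑ k, c k • I.piecewise (evec N) (fvec N) k = x := by
  refine (linearIndependent_piecewise_evec_fvec I).exists_sum_smul_eq_of_sum_eq_zero
    (by simp only [Fintype.card_fin]; omega) (fun k => ?_) hx
  by_cases hk : k ∈ I
  · simp [hk, sum_evec]
  · simp [hk, sum_fvec]

theorem sum_apply_sum_smul_eq_zero {R n ι : Type*} [CommSemiring R] [Fintype n] {v : ι → n → R}
    (hv : ∀ k, ∑ j, v k j = 0) (s : Finset ι) (c : ι → R) :
    ∑ j, (∑ k ∈ s, c k • v k) j = 0 := by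
  simp [Finset.sum_apply, sum_comm (γ := n), ← mul_sum, hv]

theorem coeff_sign_of_inNegChamberInt {x : Fin N → ℝ} (hx : inNegChamberInt x)
    {c : Fin (N - 1) → ℝ} (hc : ∑ k, c k • I.piecewise (evec N) (fvec N) k = x) :
    (∀ k ∈ I, c k < 0) ∧ (∀ k ∉ I, c k ≤ 0) := by
  rw [Finset.sum_smul_piecewise] at hc
  set y := ∑ j ∈ Iᶜ, c j • fvec N j
  have hy : ∑ j, y j = 0 := sum_apply_sum_smul_eq_zero sum_fvec _ _
  have hy_evec (k : Fin (N - 1)) : partialSum y (k + 1) = if k ∈ I then 0 else c k := by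
    have := dotProduct_sum_smul_of_biorthogonal evec_dotProduct_fvec Iᶜ c k
    rw [dotProduct_comm, dotProduct_evec, hy] at this
    simpa [mem_compl, ite_not] using this
  have hy_fvec (k : Fin (N - 1)) :
      x ⬝ᵥ fvec N k = (if k ∈ I then c k else 0) + y ⬝ᵥ fvec N k := by
    rw [← hc, add_dotProduct, sum_smul_dotProduct_of_biorthogonal evec_dotProduct_fvec]
  have hxf := (strictMono_iff_forall_dotProduct_fvec_neg x).mp hx.2
  have hP : ∀ m ≤ N, partialSum y m ≤ 0 := by
    refine nonpos_of_forall_eq_zero_or_lt_add fun m hm => ?_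
    rcases Nat.eq_zero_or_pos m with rfl | hm0
    · exact Or.inl (partialSum_zero y)
    rcases hm.eq_or_lt with rfl | hmN
    · exact Or.inl ((partialSum_self y).trans hy)
    obtain ⟨k, rfl⟩ : ∃ k : Fin (N - 1), m = k + 1 := ⟨⟨m - 1, by omega⟩, by simp; omega⟩
    by_cases hk : k ∈ I
    · exact Or.inl (by simp [hy_evec, hk])
    · refine Or.inr ⟨by omega, hmN, ?_⟩
      have := hxf k
      rw [hy_fvec, if_neg hk, zero_add, dotProduct_fvec_eq_partialSum] at this
      rw [Nat.add_sub_cancel]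
      linarith
  refine ⟨fun k hk => ?_, fun k hk => ?_⟩
  · have h1 := hy_fvec k
    have h2 := hy_evec k
    rw [dotProduct_fvec_eq_partialSum y, if_pos hk] at h1
    rw [if_pos hk] at h2
    linarith [hxf k, hP k (by omega), hP (k + 2) (by omega)]
  · simpa [hy_evec, hk] using hP (k + 1) (by omega)

theorem exists_inNegChamberInt_add_sum_smul_fvec (hN : 2 ≤ N) {a : Fin (N - 1) → ℝ}
    (ha : ∀ i ∈ I, a i < 0) :
    ∃ b : Fin (N - 1) → ℝ,
      inNegChamberInt ((∑ i ∈ I, a i • evec N i) + ∑ j ∈ Iᶜ, b j • fvec N j) := by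
  set x₀ : Fin N → ℝ := fun u => u - (∑ w : Fin N, (w : ℝ)) / N
  have hx₀ : ∑ j, x₀ j = 0 := by
    have : (N : ℝ) ≠ 0 := by norm_cast; omega
    simp [x₀, sum_sub_distrib, mul_div_cancel₀ _ this]
  obtain ⟨c, hc⟩ := exists_sum_smul_piecewise_evec_fvec I hN hx₀
  rw [Finset.sum_smul_piecewise] at hc
  set y₀ := ∑ j ∈ Iᶜ, c j • fvec N j
  have hy₀ (k : Fin (N - 1)) (hk : k ∉ I) : y₀ ⬝ᵥ fvec N k = -1 := by
    have : x₀ ⬝ᵥ fvec N k = -1 := by simp [dotProduct_fvec, x₀]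
    rwa [← hc, add_dotProduct, sum_smul_dotProduct_of_biorthogonal evec_dotProduct_fvec,
      if_neg hk, zero_add] at this
  have hsmall : ∀ᶠ ε in 𝓝[>] (0 : ℝ),
      ∀ k, (if k ∈ I then a k else 0) + ε * (y₀ ⬝ᵥ fvec N k) < 0 := by
    refine Filter.eventually_all.mpr fun k => ?_
    by_cases hk : k ∈ I
    · have hcont : Continuous fun ε : ℝ => a k + ε * (y₀ ⬝ᵥ fvec N k) := by fun_prop
      simpa only [if_pos hk] using ((hcont.tendsto' 0 (a k) (by simp)).eventually
        (gt_mem_nhds (ha k hk))).filter_mono nhdsWithin_le_nhds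
    · filter_upwards [self_mem_nhdsWithin] with ε hε
      simpa [hk, hy₀ k hk] using hε
  obtain ⟨ε, hε⟩ := hsmall.exists
  refine ⟨fun j => ε * c j, ?_, ?_⟩
  · simp only [Pi.add_apply, sum_add_distrib, sum_apply_sum_smul_eq_zero sum_evec,
      sum_apply_sum_smul_eq_zero sum_fvec, add_zero]
  · have hb : ∑ j ∈ Iᶜ, (ε * c j) • fvec N j = ε • y₀ := by simp [y₀, smul_sum, mul_smul]
    rw [strictMono_iff_forall_dotProduct_fvec_neg, hb]
    intro k
    rw [add_dotProduct, sum_smul_dotProduct_of_biorthogonal evec_dotProduct_fvec, smul_dotProduct,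
      smul_eq_mul]
    exact hε k

end Decomposition

/-- The paper's sublemma on `σ_I` and `π_I`: every `x ∈ C₋°` decomposes uniquely as
`x = ∑_{i∈I} aᵢ eᵢ + ∑_{j∉I} bⱼ fⱼ` with `aᵢ < 0` and `bⱼ ≤ 0`; conversely any negative
coefficients `aᵢ` arise this way; hence the projection of `C₋°` onto `span{eᵢ : i ∈ I}`
along `span{fⱼ : j ∉ I}` is exactly `{∑ aᵢ eᵢ : aᵢ < 0}`. -/
theorem stmt10 (N : ℕ) (hN : 2 ≤ N) (I : Finset (Fin (N - 1))) :
    (∀ x : Fin N → ℝ, inNegChamberInt x →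
      ∃ c : Fin (N - 1) → ℝ,
        x = (∑ k, c k • (if k ∈ I then evec N k else fvec N k)) ∧
        (∀ c' : Fin (N - 1) → ℝ,
          x = (∑ k, c' k • (if k ∈ I then evec N k else fvec N k)) → c' = c) ∧
        (∀ k ∈ I, c k < 0) ∧ (∀ k ∉ I, c k ≤ 0)) ∧
    (∀ a : Fin (N - 1) → ℝ, (∀ i ∈ I, a i < 0) →
      ∃ b : Fin (N - 1) → ℝ,
        inNegChamberInt ((∑ i ∈ I, a i • evec N i) + ∑ j ∈ Iᶜ, b j • fvec N j)) ∧
    ({ y : Fin N → ℝ |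
        (∃ a : Fin (N - 1) → ℝ, y = ∑ i ∈ I, a i • evec N i) ∧
        ∃ x : Fin N → ℝ, inNegChamberInt x ∧
          ∃ b : Fin (N - 1) → ℝ, x - y = ∑ j ∈ Iᶜ, b j • fvec N j } =
      { y : Fin N → ℝ |
        ∃ a : Fin (N - 1) → ℝ, (∀ i ∈ I, a i < 0) ∧ y = ∑ i ∈ I, a i • evec N i }) := by
  refine ⟨fun x hx => ?_, fun a ha => exists_inNegChamberInt_add_sum_smul_fvec I hN ha, ?_⟩
  · obtain ⟨c, hc⟩ := exists_sum_smul_piecewise_evec_fvec I hN hx.1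
    refine ⟨c, hc.symm, fun c' hc' => funext ?_, coeff_sign_of_inNegChamberInt I hx hc⟩
    exact Fintype.linearIndependent_iffₛ.mp (linearIndependent_piecewise_evec_fvec I) c' c
      (hc'.symm.trans hc.symm)
  · ext y
    constructor
    · rintro ⟨⟨a, rfl⟩, x, hx, b, hxb⟩
      have hx' : ∑ k, I.piecewise a b k • I.piecewise (evec N) (fvec N) k = x := by
        rw [Finset.sum_piecewise_smul_piecewise, sub_eq_iff_eq_add'.mp hxb]
      refine ⟨a, fun i hi => ?_, rfl⟩
      simpa [hi] using (coeff_sign_of_inNegChamberInt I hx hx').1 i hi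
    · rintro ⟨a, ha, rfl⟩
      obtain ⟨b, hb⟩ := exists_inNegChamberInt_add_sum_smul_fvec I hN ha
      exact ⟨⟨a, rfl⟩, _, hb, b, add_sub_cancel_left _ _⟩
end

section
/- Let N ≥ 2 and 1 ≤ k ≤ N−1. Let X and Y be N×N traceless skew-Hermitian complex matrices such that every eigenvalue α of the Hermitian matrix −iX satisfies |α| < 1/(100N), every eigenvalue β of −iY satisfies −2πk/N < β < 2π(N−k)/N, and exp(Y) = e^{−2πik/N}·exp(X). Then −iX has exactly k negative eigenvalues and exactly N−k positive eigenvalues, counted with multiplicity (in particular 0 is not an eigenvalue of X). -/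
/-!
Write `α` and `β` for the eigenvalues of `-iX` and `-iY`, and `θ = 2πk/N`. Diagonalising, the
eigenvalues of `e^Y` are the `e^{iβ_j}` and those of `e^{-iθ} e^X` are the `e^{i(α_i - θ)}`, so
after reindexing by a permutation `σ` we get `e^{iβ_{σ i}} = e^{i(α_i - θ)}`. As `β + θ` lies in
`(0, 2π)` and `α` is small, this pins down `β_{σ i} = α_i - θ + 2π·[α_i < 0]` and forces
`α_i ≠ 0`. Summing over `i`, the trace conditions give `0 = -Nθ + 2π·#{i | α_i < 0}`.
-/

open Matrix Polynomial Complex Finset Real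

theorem Fintype.exists_equiv_apply_eq_of_map_univ_eq {ι κ α : Type*} [Fintype ι] [Fintype κ]
    {f : ι → α} {g : κ → α} (h : univ.val.map f = univ.val.map g) :
    ∃ e : ι ≃ κ, ∀ i, g (e i) = f i := by
  classical
  refine ⟨Equiv.ofFiberEquiv fun c => Fintype.equivOfCardEq ?_, Equiv.ofFiberEquiv_map _⟩
  have hc := congrArg (Multiset.count c) h
  simp only [Multiset.count_map] at hc
  simpa [Fintype.card_subtype, Finset.card, eq_comm] using hc

theorem Matrix.roots_charpoly_smul_exp_units_conj_diagonal {n : Type*} [Fintype n]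
    [DecidableEq n] (u : (Matrix n n ℂ)ˣ) (d : n → ℂ) (c : ℂ) :
    (c • NormedSpace.exp (u.val * diagonal d * u⁻¹.val)).charpoly.roots =
      univ.val.map fun i => c * Complex.exp (d i) := by
  rw [Matrix.exp_units_conj, exp_diagonal, ← smul_mul_assoc, ← mul_smul_comm, ← diagonal_smul,
    charpoly_mul_comm, ← mul_assoc, Units.inv_mul, one_mul, charpoly_diagonal,
    roots_prod _ _ (prod_ne_zero_iff.mpr fun i _ => X_sub_C_ne_zero _)]
  simp only [roots_X_sub_C, Multiset.bind_singleton]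
  simp [Pi.exp_def, Complex.exp_eq_exp_ℂ]

theorem Matrix.IsHermitian.roots_charpoly_smul_exp_I_smul {n : Type*} [Fintype n]
    [DecidableEq n] {A : Matrix n n ℂ} (hA : A.IsHermitian) (c : ℂ) :
    (c • NormedSpace.exp (I • A)).charpoly.roots =
      univ.val.map fun i => c * Complex.exp (hA.eigenvalues i * I) := by
  let u : (Matrix n n ℂ)ˣ := Unitary.toUnits hA.eigenvectorUnitary
  have hdiag : I • A = u.val * diagonal (fun i => hA.eigenvalues i * I) * u⁻¹.val := by
    conv_lhs => rw [hA.spectral_theorem, Unitary.conjStarAlgAut_apply]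
    rw [← smul_mul_assoc, ← mul_smul_comm, ← diagonal_smul, show I • (RCLike.ofReal ∘ hA.eigenvalues) = fun i => (hA.eigenvalues i : ℂ) * I from
      funext fun _ => mul_comm _ _]
    rfl
  rw [hdiag, roots_charpoly_smul_exp_units_conj_diagonal]

theorem Matrix.IsHermitian.sum_eigenvalues_eq_zero {n 𝕜 : Type*} [Fintype n] [DecidableEq n]
    [RCLike 𝕜] {A : Matrix n n 𝕜} (hA : A.IsHermitian) (h : A.trace = 0) :
    ∑ i, hA.eigenvalues i = 0 := by
  have := hA.trace_eq_sum_eigenvalues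
  rw [h] at this
  exact_mod_cast this.symm

theorem Real.eq_sub_add_two_pi_of_exp_mul_I_eq {x a θ : ℝ} (hx₁ : -θ < x) (hx₂ : x < 2 * π - θ)
    (ha : |a| < 2 * π) (h : Complex.exp (x * I) = Complex.exp (↑(a - θ) * I)) :
    a ≠ 0 ∧ x = a - θ + 2 * π * if a < 0 then 1 else 0 := by
  obtain ⟨m, hm⟩ := Circle.exp_eq_exp.mp (Circle.ext h)
  have hπ := Real.pi_pos
  obtain ⟨ha₁, ha₂⟩ := abs_lt.mp ha
  rcases lt_trichotomy a 0 with ha0 | rfl | ha0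
  · have hm₁ : (0 : ℝ) < m := by nlinarith
    have hm₂ : (m : ℝ) < 2 := by nlinarith
    obtain rfl : m = 1 := by
      have : 0 < m := by exact_mod_cast hm₁
      have : m < 2 := by exact_mod_cast hm₂
      omega
    refine ⟨ha0.ne, ?_⟩
    rw [if_pos ha0]
    push_cast at hm
    linarith
  · have hm₁ : (0 : ℝ) < m := by nlinarith
    have hm₂ : (m : ℝ) < 1 := by nlinarith
    have : 0 < m := by exact_mod_cast hm₁
    have : m < 1 := by exact_mod_cast hm₂
    omega
  · have hm₁ : (-1 : ℝ) < m := by nlinarith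
    have hm₂ : (m : ℝ) < 1 := by nlinarith
    obtain rfl : m = 0 := by
      have : -1 < m := by exact_mod_cast hm₁
      have : m < 1 := by exact_mod_cast hm₂
      omega
    refine ⟨ha0.ne', ?_⟩
    rw [if_neg ha0.not_gt]
    push_cast at hm
    linarith

theorem Matrix.map_exp_eigenvalues_eq_of_exp_eq_exp_smul_exp {n : Type*} [Fintype n]
    [DecidableEq n] {X Y : Matrix n n ℂ} (hX : (-I • X).IsHermitian) (hY : (-I • Y).IsHermitian)
    (θ : ℝ) (h : NormedSpace.exp Y = Complex.exp (↑(-θ) * I) • NormedSpace.exp X) :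
    univ.val.map (fun i => Complex.exp (↑(hX.eigenvalues i - θ) * I)) =
      univ.val.map (fun j => Complex.exp (hY.eigenvalues j * I)) := by
  have hX' := hX.roots_charpoly_smul_exp_I_smul (Complex.exp (↑(-θ) * I))
  have hY' := hY.roots_charpoly_smul_exp_I_smul 1
  simp only [smul_smul, mul_neg, I_mul_I, neg_neg, one_smul, one_mul, ← h] at hX' hY'
  rw [← hY', hX']
  refine Multiset.map_congr rfl fun i _ => ?_
  rw [← Complex.exp_add]
  push_cast
  congr 1
  ring

theorem two_pi_mul_card_filter_neg_eq_of_map_exp_eq {ι : Type*} [Fintype ι] {α β : ι → ℝ} {θ : ℝ}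
    (hα : ∀ i, |α i| < 2 * π) (hβ : ∀ j, -θ < β j ∧ β j < 2 * π - θ) (hsum : ∑ j, β j = ∑ i, α i)
    (hexp : univ.val.map (fun i => Complex.exp (↑(α i - θ) * I)) =
      univ.val.map (fun j => Complex.exp (β j * I))) :
    (∀ i, α i ≠ 0) ∧ 2 * π * (univ.filter fun i => α i < 0).card = Fintype.card ι * θ := by
  obtain ⟨σ, hσ⟩ := Fintype.exists_equiv_apply_eq_of_map_univ_eq hexp
  have hlift (i : ι) :=
    Real.eq_sub_add_two_pi_of_exp_mul_I_eq (hβ (σ i)).1 (hβ (σ i)).2 (hα i) (hσ i)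
  refine ⟨fun i => (hlift i).1, ?_⟩
  have hsum' : ∑ i, β (σ i) =
      ∑ i, α i - Fintype.card ι * θ + 2 * π * (univ.filter fun i => α i < 0).card := by
    simp only [(hlift _).2, sum_add_distrib, sum_sub_distrib, ← mul_sum, sum_boole, sum_const,
      card_univ, nsmul_eq_mul]
  rw [Equiv.sum_comp σ β, hsum] at hsum'
  linarith

theorem Finset.card_filter_pos_eq_card_sub_card_filter_neg {ι : Type*} [Fintype ι] {f : ι → ℝ}
    (hf : ∀ i, f i ≠ 0) :
    (univ.filter fun i => 0 < f i).card = Fintype.card ι - (univ.filter fun i => f i < 0).card := by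
  have hpos : (univ.filter fun i => 0 < f i) = univ.filter fun i => ¬f i < 0 :=
    filter_congr fun i _ => by simp [not_lt, le_iff_lt_or_eq, (hf i).symm]
  rw [hpos, ← card_univ, ← card_filter_add_card_filter_not (s := univ) (p := fun i => f i < 0)]
  omega

theorem stmt16_general (N k : ℕ) (hN : 2 ≤ N)
    (X Y : Matrix (Fin N) (Fin N) ℂ)
    (hXtr : X.trace = 0) (hYtr : Y.trace = 0)
    (hX : ((-Complex.I) • X).IsHermitian) (hY : ((-Complex.I) • Y).IsHermitian)
    (hXs : ∀ j, |hX.eigenvalues j| < 1 / (100 * (N : ℝ)))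
    (hYs : ∀ j, -(2 * Real.pi * (k : ℝ) / (N : ℝ)) < hY.eigenvalues j ∧
      hY.eigenvalues j < 2 * Real.pi * ((N : ℝ) - (k : ℝ)) / (N : ℝ))
    (hexp : NormedSpace.exp Y =
      Complex.exp (((-(2 * Real.pi * (k : ℝ) / (N : ℝ)) : ℝ) : ℂ) * Complex.I) •
        NormedSpace.exp X) :
    (Finset.univ.filter fun j : Fin N => hX.eigenvalues j < 0).card = k ∧
    (Finset.univ.filter fun j : Fin N => 0 < hX.eigenvalues j).card = N - k := by
  set θ : ℝ := 2 * π * k / N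
  have hN' : (2 : ℝ) ≤ N := by exact_mod_cast hN
  have hα (i : Fin N) : |hX.eigenvalues i| < 2 * π := by
    refine (hXs i).trans ?_
    rw [div_lt_iff₀ (by positivity)]
    nlinarith [pi_gt_three]
  have hβ (j : Fin N) : -θ < hY.eigenvalues j ∧ hY.eigenvalues j < 2 * π - θ := by
    have hθ : 2 * π * (N - k) / N = 2 * π - θ := by simp only [θ]; field_simp
    exact hθ ▸ hYs j
  have hsum : ∑ j, hY.eigenvalues j = ∑ i, hX.eigenvalues i := by
    rw [hY.sum_eigenvalues_eq_zero (by rw [trace_smul, hYtr, smul_zero]),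
      hX.sum_eigenvalues_eq_zero (by rw [trace_smul, hXtr, smul_zero])]
  obtain ⟨hne, hcount⟩ := two_pi_mul_card_filter_neg_eq_of_map_exp_eq hα hβ hsum
    (map_exp_eigenvalues_eq_of_exp_eq_exp_smul_exp hX hY θ hexp)
  have hneg : (univ.filter fun i => hX.eigenvalues i < 0).card = k := by
    have hNθ : (N : ℝ) * θ = 2 * π * k := by simp only [θ]; field_simp
    rw [Fintype.card_fin, hNθ] at hcount
    exact_mod_cast mul_left_cancel₀ (by positivity) hcount
  refine ⟨hneg, ?_⟩
  rw [card_filter_pos_eq_card_sub_card_filter_neg hne, hneg, Fintype.card_fin]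

/-- The spectral counting step in the paper's computation of `Σ_k = 𝔖|_{G×(-2πe_k)}`:
if all eigenvalues of `-iX` are smaller than `1/(100N)` in absolute value, all
eigenvalues of `-iY` lie in `(-2πk/N, 2π(N-k)/N)`, and `e^Y = e^{-2πik/N}·e^X`, then
`-iX` has exactly `k` negative and `N - k` positive eigenvalues (with multiplicity). -/
theorem stmt16 (N k : ℕ) (hN : 2 ≤ N) (hk1 : 1 ≤ k) (hk : k ≤ N - 1)
    (X Y : Matrix (Fin N) (Fin N) ℂ)
    (hXtr : X.trace = 0) (hYtr : Y.trace = 0)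
    (hX : ((-Complex.I) • X).IsHermitian) (hY : ((-Complex.I) • Y).IsHermitian)
    (hXs : ∀ j, |hX.eigenvalues j| < 1 / (100 * (N : ℝ)))
    (hYs : ∀ j, -(2 * Real.pi * (k : ℝ) / (N : ℝ)) < hY.eigenvalues j ∧
      hY.eigenvalues j < 2 * Real.pi * ((N : ℝ) - (k : ℝ)) / (N : ℝ))
    (hexp : NormedSpace.exp Y =
      Complex.exp (((-(2 * Real.pi * (k : ℝ) / (N : ℝ)) : ℝ) : ℂ) * Complex.I) •
        NormedSpace.exp X) :
    (Finset.univ.filter fun j : Fin N => hX.eigenvalues j < 0).card = k ∧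
    (Finset.univ.filter fun j : Fin N => 0 < hX.eigenvalues j).card = N - k :=
  stmt16_general N k hN X Y hXtr hYtr hX hY hXs hYs hexp
end
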